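/- arXiv:2212.02275 — 2 statements merged into one kernel-verified Lean document; each statement's English description precedes it below -/
import Mathlib

section
/- Let R be a ring, M a finitely presented R-module, and (N_n)_{n∈ℕ} a countable inverse system of Artinian R-modules. Then the natural map M ⊗_R (lim_n N_n) → lim_n (M ⊗_R N_n) is an isomorphism. -/
open TensorProduct

/-- The inverse limit of an inverse system of `R`-modules indexed by `ℕ`, as a submodule of
the product. -/
def invLim (R : Type*) [CommRing R] (N : ℕ → Type*) [∀ n, AddCommGroup (N n)]
    [∀ n, Module R (N n)] (t : ∀ n, N (n + 1) →ₗ[R] N n) : Submodule R (∀ n, N n) where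
  carrier := {x | ∀ n, t n (x (n + 1)) = x n}
  add_mem' := by
    intro a b ha hb n
    simp only [Set.mem_setOf_eq] at ha hb
    simp [ha n, hb n]
  zero_mem' := by intro n; simp
  smul_mem' := by
    intro c a ha n
    simp only [Set.mem_setOf_eq] at ha
    simp [ha n]

/-- The natural map `M ⊗ lim Nₙ → lim (M ⊗ Nₙ)`, sending `m ⊗ (xₙ)ₙ` to `(m ⊗ xₙ)ₙ`. -/
noncomputable def natTensorLimMap (R : Type*) [CommRing R] (M : Type*) [AddCommGroup M]
    [Module R M] (N : ℕ → Type*) [∀ n, AddCommGroup (N n)] [∀ n, Module R (N n)]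
    (t : ∀ n, N (n + 1) →ₗ[R] N n) :
    M ⊗[R] (invLim R N t) →ₗ[R]
      invLim R (fun n => M ⊗[R] N n) (fun n => LinearMap.lTensor M (t n)) :=
  TensorProduct.lift <| LinearMap.mk₂ R
    (fun m x => ⟨fun n => m ⊗ₜ[R] (x : ∀ n, N n) n, by
      intro n
      show LinearMap.lTensor M (t n) (m ⊗ₜ[R] (x : ∀ n, N n) (n + 1)) = m ⊗ₜ[R] (x : ∀ n, N n) n
      rw [LinearMap.lTensor_tmul, x.2 n]⟩)
    (fun m₁ m₂ x => Subtype.ext (funext fun n => add_tmul m₁ m₂ _))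
    (fun c m x => Subtype.ext (funext fun n => (smul_tmul' c m _).symm))
    (fun m x y => Subtype.ext (funext fun n => tmul_add m _ _))
    (fun c m x => Subtype.ext (funext fun n => tmul_smul c m _))

/-- The composite transition map `N (n+k) → N n` of the inverse system. -/
def downMap {R : Type*} [CommRing R] (N : ℕ → Type*) [∀ n, AddCommGroup (N n)]
    [∀ n, Module R (N n)] (t : ∀ n, N (n + 1) →ₗ[R] N n) (n : ℕ) :
    ∀ k : ℕ, N (n + k) →ₗ[R] N n
  | 0 => LinearMap.id
  | k + 1 => (downMap N t n k).comp (t (n + k))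

/-!
Choose a presentation `R^p → R^q → M → 0`. Tensoring it with `lim Nₙ`, and taking the limit of
its tensor products with the `Nₙ`, gives two right exact rows linked by the natural maps, so by
the five lemma it suffices to treat `R^p` and `R^q`, where the natural map is bijective because
`R^q ⊗ X ≅ X^q`. Exactness of the bottom row is a Mittag-Leffler argument: the fibres of
`R^q ⊗ Nₙ → M ⊗ Nₙ` (and of `R^p ⊗ Nₙ → R^q ⊗ Nₙ`) are cosets in an Artinian module, so their
images in any fixed stage form a descending chain of cosets, which stabilizes.
-/

section IterImage

variable {X : ℕ → Type*} (s : ∀ n, X (n + 1) → X n)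

/-- `iterImage s C k n` is the image of `C (n + k)` in `X n`. -/
def iterImage (C : ∀ n, Set (X n)) : ℕ → ∀ n, Set (X n)
  | 0 => C
  | k + 1 => fun n => s n '' iterImage C k (n + 1)

variable {s} {C : ∀ n, Set (X n)}

theorem iterImage_succ_subset (hC : ∀ n, Set.MapsTo (s n) (C (n + 1)) (C n)) :
    ∀ k n, iterImage s C (k + 1) n ⊆ iterImage s C k n
  | 0, n => (hC n).image_subset
  | k + 1, n => Set.image_mono (iterImage_succ_subset hC k (n + 1))

theorem iterImage_subset (hC : ∀ n, Set.MapsTo (s n) (C (n + 1)) (C n)) (k n : ℕ) :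
    iterImage s C k n ⊆ C n :=
  antitone_nat_of_succ_le (f := fun k => iterImage s C k n) (fun k => iterImage_succ_subset hC k n)
    (Nat.zero_le k)

theorem iterImage_nonempty (hC : ∀ n, (C n).Nonempty) :
    ∀ k n, (iterImage s C k n).Nonempty
  | 0, n => hC n
  | k + 1, n => (iterImage_nonempty hC k (n + 1)).image _

theorem exists_compatible_of_surjOn {E : ∀ n, Set (X n)} (hE : (E 0).Nonempty)
    (hsurj : ∀ n, Set.SurjOn (s n) (E (n + 1)) (E n)) :
    ∃ x : ∀ n, X n, (∀ n, s n (x (n + 1)) = x n) ∧ ∀ n, x n ∈ E n := by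
  choose lift lift_mem s_lift using fun n x (hx : x ∈ E n) => hsurj n hx
  let seq : ∀ n, E n := fun n =>
    Nat.rec ⟨hE.some, hE.some_mem⟩ (fun n y => ⟨lift n y.1 y.2, lift_mem n y.1 y.2⟩) n
  exact ⟨fun n => (seq n).1, fun n => s_lift n _ (seq n).2, fun n => (seq n).2⟩

/-- Mittag-Leffler for sequences of sets: once the images of the later stages in each stage
stabilize, the stable images map onto each other, and a compatible sequence can be built
stage by stage. -/
theorem exists_compatible_of_iterImage_stabilizes
    (hC : ∀ n, Set.MapsTo (s n) (C (n + 1)) (C n)) (hne : ∀ n, (C n).Nonempty)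
    (hstab : ∀ n, ∃ K, ∀ k ≥ K, iterImage s C k n = iterImage s C K n) :
    ∃ x : ∀ n, X n, (∀ n, s n (x (n + 1)) = x n) ∧ ∀ n, x n ∈ C n := by
  choose K hK using hstab
  obtain ⟨x, hxs, hxE⟩ := exists_compatible_of_surjOn (E := fun n => iterImage s C (K n) n)
    (iterImage_nonempty hne _ _) fun n => by
      let k := max (K n) (K (n + 1))
      have stable_n : iterImage s C (k + 1) n = iterImage s C (K n) n := hK n _ (by omega)
      have stable_succ : iterImage s C k (n + 1) = iterImage s C (K (n + 1)) (n + 1) :=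
        hK (n + 1) _ (le_max_right _ _)
      rw [Set.SurjOn, ← stable_n, ← stable_succ]
      rfl
  exact ⟨x, hxs, fun n => iterImage_subset hC _ n (hxE n)⟩

end IterImage

section Artinian

variable {R : Type*} [CommRing R]

theorem IsArtinian.antitone_affineSubspace_stabilizes {A : Type*} [AddCommGroup A] [Module R A]
    [IsArtinian R A] (S : ℕ → AffineSubspace R A) (hS : Antitone S)
    (hne : ∀ k, (S k : Set A).Nonempty) : ∃ K, ∀ k ≥ K, S k = S K := by
  obtain ⟨K, hK⟩ := IsArtinian.monotone_stabilizes
    ⟨fun k => OrderDual.toDual (S k).direction, fun _ _ h => AffineSubspace.direction_le (hS h)⟩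
  exact ⟨K, fun k hk =>
    AffineSubspace.eq_of_direction_eq_of_nonempty_of_le (hK k hk).symm (hne k) (hS hk)⟩

variable {A : ℕ → Type*} [∀ n, AddCommGroup (A n)] [∀ n, Module R (A n)]

theorem exists_affineSubspace_coe_eq_iterImage (s : ∀ n, A (n + 1) →ₗ[R] A n)
    (C : ∀ n, AffineSubspace R (A n)) :
    ∀ k n, ∃ S : AffineSubspace R (A n),
      (S : Set (A n)) = iterImage (fun n => s n) (fun n => C n) k n
  | 0, n => ⟨C n, rfl⟩
  | k + 1, n =>
    let ⟨S, hS⟩ := exists_affineSubspace_coe_eq_iterImage s C k (n + 1)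
    ⟨S.map (s n).toAffineMap, by rw [AffineSubspace.coe_map, hS]; rfl⟩

theorem iterImage_stabilizes_of_isArtinian [∀ n, IsArtinian R (A n)]
    (s : ∀ n, A (n + 1) →ₗ[R] A n) (C : ∀ n, AffineSubspace R (A n))
    (hC : ∀ n, Set.MapsTo (s n) (C (n + 1)) (C n)) (hne : ∀ n, (C n : Set (A n)).Nonempty)
    (n : ℕ) :
    ∃ K, ∀ k ≥ K, iterImage (fun n => s n) (fun n => C n) k n =
      iterImage (fun n => s n) (fun n => C n) K n := by
  choose S hS using exists_affineSubspace_coe_eq_iterImage s C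
  obtain ⟨K, hK⟩ := IsArtinian.antitone_affineSubspace_stabilizes (fun k => S k n)
    (antitone_nat_of_succ_le fun k => by
      rw [← SetLike.coe_subset_coe, hS, hS]
      exact iterImage_succ_subset hC k n)
    (fun k => by rw [hS]; exact iterImage_nonempty hne k n)
  exact ⟨K, fun k hk => by rw [← hS, ← hS, hK k hk]⟩

end Artinian

namespace invLim

variable {R : Type*} [CommRing R]
variable {A B C : ℕ → Type*} [∀ n, AddCommGroup (A n)] [∀ n, Module R (A n)]
  [∀ n, AddCommGroup (B n)] [∀ n, Module R (B n)] [∀ n, AddCommGroup (C n)] [∀ n, Module R (C n)]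
  {s : ∀ n, A (n + 1) →ₗ[R] A n} {u : ∀ n, B (n + 1) →ₗ[R] B n} {w : ∀ n, C (n + 1) →ₗ[R] C n}

variable (s u) in
def map (f : ∀ n, A n →ₗ[R] B n) (hf : ∀ n, u n ∘ₗ f (n + 1) = f n ∘ₗ s n) :
    invLim R A s →ₗ[R] invLim R B u :=
  (LinearMap.pi fun n => f n ∘ₗ LinearMap.proj n).restrict fun x hx n =>
    (LinearMap.congr_fun (hf n) (x (n + 1))).trans (congr_arg (f n) (hx n))

@[simp]
theorem map_apply (f : ∀ n, A n →ₗ[R] B n) (hf : ∀ n, u n ∘ₗ f (n + 1) = f n ∘ₗ s n)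
    (x : invLim R A s) (n : ℕ) : (map s u f hf x : ∀ n, B n) n = f n ((x : ∀ n, A n) n) :=
  rfl

theorem mem_range_map_of_isArtinian [∀ n, IsArtinian R (A n)] {f : ∀ n, A n →ₗ[R] B n}
    (hf : ∀ n, u n ∘ₗ f (n + 1) = f n ∘ₗ s n) (b : invLim R B u)
    (hb : ∀ n, (b : ∀ n, B n) n ∈ LinearMap.range (f n)) :
    b ∈ LinearMap.range (map s u f hf) := by
  choose a ha using hb
  let fibre n : AffineSubspace R (A n) := AffineSubspace.mk' (a n) (LinearMap.ker (f n))
  have mem_fibre n x : x ∈ fibre n ↔ f n x = (b : ∀ n, B n) n := by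
    rw [AffineSubspace.mem_mk', vsub_eq_sub, LinearMap.mem_ker, map_sub, sub_eq_zero, ha]
  have maps_to n : Set.MapsTo (s n) (fibre (n + 1)) (fibre n) := fun x hx => by
    rw [SetLike.mem_coe, mem_fibre] at hx ⊢
    rw [← LinearMap.comp_apply, ← hf n, LinearMap.comp_apply, hx, b.2 n]
  have nonempty n : (fibre n : Set (A n)).Nonempty := ⟨a n, (mem_fibre n _).2 (ha n)⟩
  obtain ⟨x, hxs, hx⟩ := exists_compatible_of_iterImage_stabilizes maps_to nonempty
    (iterImage_stabilizes_of_isArtinian s fibre maps_to nonempty)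
  exact ⟨⟨x, hxs⟩, Subtype.ext (funext fun n => (mem_fibre n _).1 (hx n))⟩

theorem map_surjective_of_isArtinian [∀ n, IsArtinian R (A n)] {f : ∀ n, A n →ₗ[R] B n}
    (hf : ∀ n, u n ∘ₗ f (n + 1) = f n ∘ₗ s n) (hsurj : ∀ n, Function.Surjective (f n)) :
    Function.Surjective (map s u f hf) := fun b =>
  mem_range_map_of_isArtinian hf b fun n => hsurj n _

theorem exact_map_of_isArtinian [∀ n, IsArtinian R (A n)] {f : ∀ n, A n →ₗ[R] B n}
    {g : ∀ n, B n →ₗ[R] C n} (hf : ∀ n, u n ∘ₗ f (n + 1) = f n ∘ₗ s n)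
    (hg : ∀ n, w n ∘ₗ g (n + 1) = g n ∘ₗ u n) (hexact : ∀ n, Function.Exact (f n) (g n)) :
    Function.Exact (map s u f hf) (map u w g hg) := by
  intro b
  constructor
  · intro hb
    refine mem_range_map_of_isArtinian hf b fun n => (hexact n _).1 ?_
    simpa using congr_arg (fun c : invLim R C w => (c : ∀ n, C n) n) hb
  · rintro ⟨a, rfl⟩
    ext n
    exact (hexact n _).2 ⟨_, rfl⟩

end invLim

section NatTensorLimMap

variable {R : Type*} [CommRing R] (N : ℕ → Type*) [∀ n, AddCommGroup (N n)]
  [∀ n, Module R (N n)] (t : ∀ n, N (n + 1) →ₗ[R] N n)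
  {M M' : Type*} [AddCommGroup M] [Module R M] [AddCommGroup M'] [Module R M']

@[simp]
theorem natTensorLimMap_tmul_apply (m : M) (x : invLim R N t) (n : ℕ) :
    (natTensorLimMap R M N t (m ⊗ₜ x) : ∀ n, M ⊗[R] N n) n = m ⊗ₜ (x : ∀ n, N n) n :=
  rfl

noncomputable abbrev invLim.rTensorMap (f : M →ₗ[R] M') :
    invLim R (fun n => M ⊗[R] N n) (fun n => (t n).lTensor M) →ₗ[R]
      invLim R (fun n => M' ⊗[R] N n) (fun n => (t n).lTensor M') :=
  invLim.map _ _ (fun n => f.rTensor (N n))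
    fun n =>
      (LinearMap.lTensor_comp_rTensor (f := f) (g := t n)).trans
        (LinearMap.rTensor_comp_lTensor (f := f) (g := t n)).symm

theorem natTensorLimMap_comp_rTensor (f : M →ₗ[R] M') :
    natTensorLimMap R M' N t ∘ₗ f.rTensor (invLim R N t) =
      invLim.rTensorMap N t f ∘ₗ natTensorLimMap R M N t :=
  TensorProduct.ext' fun _ _ => Subtype.ext <| funext fun _ => by simp

end NatTensorLimMap

section FiniteFree

variable {R : Type*} [CommRing R] (ι : Type*) [Fintype ι] [DecidableEq ι]

noncomputable def finTensorEquiv (X : Type*) [AddCommGroup X] [Module R X] :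
    (ι → R) ⊗[R] X ≃ₗ[R] (ι → X) :=
  TensorProduct.comm R (ι → R) X ≪≫ₗ TensorProduct.piScalarRight R R X ι

variable {ι}

@[simp]
theorem finTensorEquiv_tmul {X : Type*} [AddCommGroup X] [Module R X] (v : ι → R) (x : X) :
    finTensorEquiv ι X (v ⊗ₜ x) = fun i => v i • x := by
  simp [finTensorEquiv]

theorem finTensorEquiv_lTensor {X Y : Type*} [AddCommGroup X] [Module R X] [AddCommGroup Y]
    [Module R Y] (g : X →ₗ[R] Y) (z : (ι → R) ⊗[R] X) (i : ι) :
    finTensorEquiv ι Y (g.lTensor (ι → R) z) i = g (finTensorEquiv ι X z i) := by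
  induction z using TensorProduct.induction_on with
  | zero => simp
  | tmul v x => simp
  | add z z' hz hz' => simp only [map_add, Pi.add_apply, hz, hz']

instance {X : Type*} [AddCommGroup X] [Module R X] [IsArtinian R X] :
    IsArtinian R ((ι → R) ⊗[R] X) :=
  isArtinian_of_linearEquiv (finTensorEquiv ι X).symm

variable (N : ℕ → Type*) [∀ n, AddCommGroup (N n)] [∀ n, Module R (N n)]
  (t : ∀ n, N (n + 1) →ₗ[R] N n)

theorem finTensorEquiv_natTensorLimMap (z : (ι → R) ⊗[R] invLim R N t) (n : ℕ) (i : ι) :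
    finTensorEquiv ι (N n) ((natTensorLimMap R (ι → R) N t z : ∀ n, (ι → R) ⊗[R] N n) n) i =
      (finTensorEquiv ι (invLim R N t) z i : ∀ n, N n) n := by
  induction z using TensorProduct.induction_on with
  | zero => simp
  | tmul v x => simp
  | add z z' hz hz' => simp only [map_add, Submodule.coe_add, Pi.add_apply, hz, hz']

theorem natTensorLimMap_bijective_of_finite_free :
    Function.Bijective (natTensorLimMap R (ι → R) N t) := by
  constructor
  · rw [injective_iff_map_eq_zero]
    intro z hz
    apply (finTensorEquiv ι _).injective
    ext i n
    rw [← finTensorEquiv_natTensorLimMap, hz]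
    simp
  · intro z
    let coords (i : ι) : invLim R N t :=
      ⟨fun n => finTensorEquiv ι (N n) ((z : ∀ n, (ι → R) ⊗[R] N n) n) i,
        fun n => by rw [← finTensorEquiv_lTensor]; exact congr_fun (congr_arg _ (z.2 n)) i⟩
    refine ⟨(finTensorEquiv ι _).symm coords, Subtype.ext (funext fun n =>
      (finTensorEquiv ι (N n)).injective (funext fun i => ?_))⟩
    rw [finTensorEquiv_natTensorLimMap, LinearEquiv.apply_symm_apply]

end FiniteFree

/-- Let `M` be a finitely presented `R`-module and `(Nₙ)` a countable inverse system of
Artinian `R`-modules.  Then the natural map `M ⊗ (lim Nₙ) → lim (M ⊗ Nₙ)` is an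
isomorphism. -/
theorem tensor_commutes_with_lim_of_artinian (R : Type*) [CommRing R]
    (M : Type*) [AddCommGroup M] [Module R M] (hfp : Module.FinitePresentation R M)
    (N : ℕ → Type*) [∀ n, AddCommGroup (N n)] [∀ n, Module R (N n)]
    [∀ n, IsArtinian R (N n)]
    (t : ∀ n, N (n + 1) →ₗ[R] N n) :
    Function.Bijective (natTensorLimMap R M N t) := by
  obtain ⟨q, p, π, φ, hπ, hexact⟩ := Module.FinitePresentation.exists_fin' (fp := hfp) R M
  exact LinearMap.bijective_of_surjective_of_bijective_of_right_exact
    (φ.rTensor _) (π.rTensor _) (invLim.rTensorMap N t φ) (invLim.rTensorMap N t π)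
    (natTensorLimMap R _ N t) (natTensorLimMap R _ N t) (natTensorLimMap R M N t)
    (natTensorLimMap_comp_rTensor N t φ).symm (natTensorLimMap_comp_rTensor N t π).symm
    (rTensor_exact _ hexact hπ)
    (invLim.exact_map_of_isArtinian _ _ fun n => rTensor_exact (N n) hexact hπ)
    (natTensorLimMap_bijective_of_finite_free N t).2
    (natTensorLimMap_bijective_of_finite_free N t)
    (LinearMap.rTensor_surjective _ hπ)
    (invLim.map_surjective_of_isArtinian _ fun n => LinearMap.rTensor_surjective (N n) hπ)
end

section
/- Let ψ act on the product ∏_{n≥n₁} M_n by (x_n)_n ↦ (τ_n(x_{n+1}))_n, where M_{n+1} = M_{n₁} ⊗_{L_{n₁}} L_{n+1}, and τ_n is induced by (1/q)·tr_{L_{n+1}/L_n}. Then the kernel of ψ − 1 is the inverse limit lim_n (M_{n₁} ⊗_{L_{n₁}} L_n) along the normalized trace maps, and if M_{n₁} is finitely presented over a Noetherian base A and the system (A[Γ_{n₁}/Γ_n])_n identifies L_n-levels, this kernel is isomorphic to M_{n₁} ⊗_A lim_n A[Γ_{n₁}/Γ_n] ≅ M_{n₁} ⊗_A D(Γ_{n₁},A)/(𝔏),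 the quotient of the distribution algebra by the logarithm element 𝔏 = log_LT(Z_{n₁}). -/
open TensorProduct

/-- The natural map `M₀ ⊗ L → lim (M₀ ⊗ Nₙ)` coming from a compatible family of maps
`π n : L → N n`, sending `m ⊗ l` to `(m ⊗ π n l)ₙ`. -/
noncomputable def kernelCompareMap (R : Type*) [CommRing R] (M₀ : Type*) [AddCommGroup M₀]
    [Module R M₀] (N : ℕ → Type*) [∀ n, AddCommGroup (N n)] [∀ n, Module R (N n)]
    (t : ∀ n, N (n + 1) →ₗ[R] N n)
    (L : Type*) [AddCommGroup L] [Module R L] (π : ∀ n, L →ₗ[R] N n)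
    (hπ : ∀ n (l : L), t n (π (n + 1) l) = π n l) :
    M₀ ⊗[R] L →ₗ[R]
      invLim R (fun n => M₀ ⊗[R] N n) (fun n => LinearMap.lTensor M₀ (t n)) :=
  TensorProduct.lift <| LinearMap.mk₂ R
    (fun m l => ⟨fun n => m ⊗ₜ[R] π n l, by
      intro n
      show LinearMap.lTensor M₀ (t n) (m ⊗ₜ[R] π (n + 1) l) = m ⊗ₜ[R] π n l
      rw [LinearMap.lTensor_tmul, hπ n l]⟩)
    (fun m₁ m₂ l => Subtype.ext (funext fun n => add_tmul m₁ m₂ _))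
    (fun c m l => Subtype.ext (funext fun n => (smul_tmul' c m _).symm))
    (fun m l₁ l₂ => Subtype.ext (funext fun n => by simp [tmul_add]))
    (fun c m l => Subtype.ext (funext fun n => by simp [tmul_smul]))
/-!
The kernel of `ψ - 1` is the inverse limit by definition. For a finite free module the comparison
map `M₀ ⊗ L → lim (M₀ ⊗ Nₙ)` is `L ≅ lim Nₙ` taken coordinatewise. For a presentation
`F₁ → F₀ → M₀ → 0`, tensoring with `Nₙ` stays right exact, and by flatness of `Nₙ` the kernel of
`F₁ ⊗ Nₙ → F₀ ⊗ Nₙ` is the image of `ker ⊗ Nₙ`. As the transitions `Nₙ₊₁ → Nₙ` are surjective, so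
are the induced maps between these kernels (a Mittag-Leffler condition), hence compatible families
lift along `F₀ ⊗ Nₙ → M₀ ⊗ Nₙ` and along `F₁ ⊗ Nₙ → F₀ ⊗ Nₙ`, and a diagram chase transfers
bijectivity from the free modules to `M₀`.
-/

theorem LinearMap.lTensor_rTensor_comm_apply {R : Type*} [CommSemiring R]
    {U V X Y : Type*} [AddCommMonoid U] [Module R U] [AddCommMonoid V] [Module R V]
    [AddCommMonoid X] [Module R X] [AddCommMonoid Y] [Module R Y]
    (φ : U →ₗ[R] V) (ψ : X →ₗ[R] Y) (w : U ⊗[R] X) :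
    ψ.lTensor V (φ.rTensor X w) = φ.rTensor Y (ψ.lTensor U w) := by
  rw [← LinearMap.comp_apply, LinearMap.lTensor_comp_rTensor, ← LinearMap.rTensor_comp_lTensor,
    LinearMap.comp_apply]

noncomputable def TensorProduct.piScalarLeft (A : Type*) [CommRing A] (ι : Type*) [Fintype ι]
    [DecidableEq ι] (X : Type*) [AddCommGroup X] [Module A X] :
    (ι → A) ⊗[A] X ≃ₗ[A] (ι → X) :=
  (TensorProduct.comm A (ι → A) X).trans (TensorProduct.piScalarRight A A X ι)

theorem TensorProduct.piScalarLeft_lTensor {A : Type*} [CommRing A] {ι : Type*} [Fintype ι]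
    [DecidableEq ι] {X Y : Type*} [AddCommGroup X] [Module A X] [AddCommGroup Y] [Module A Y]
    (φ : X →ₗ[A] Y) (w : (ι → A) ⊗[A] X) (i : ι) :
    piScalarLeft A ι Y (φ.lTensor _ w) i = φ (piScalarLeft A ι X w i) := by
  induction w using TensorProduct.induction_on with
  | zero => simp
  | tmul m x => simp [piScalarLeft]
  | add x y hx hy => simp only [map_add, Pi.add_apply, hx, hy]

section InverseLimit

variable {A : Type*} [CommRing A]

theorem setOf_shift_sub_eq_zero_eq_invLim {N : ℕ → Type*} [∀ n, AddCommGroup (N n)]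
    [∀ n, Module A (N n)] (t : ∀ n, N (n + 1) →ₗ[A] N n) :
    {x : ∀ n, N n | (fun n => t n (x (n + 1))) - x = 0} = (invLim A N t : Set (∀ n, N n)) := by
  ext x
  simp only [Set.mem_ofPred_eq, sub_eq_zero, funext_iff, SetLike.mem_coe]
  rfl

theorem exists_mem_invLim_map_eq {Y Z : ℕ → Type*} [∀ n, AddCommGroup (Y n)]
    [∀ n, Module A (Y n)] [∀ n, AddCommGroup (Z n)] [∀ n, Module A (Z n)]
    {tY : ∀ n, Y (n + 1) →ₗ[A] Y n} {tZ : ∀ n, Z (n + 1) →ₗ[A] Z n} (g : ∀ n, Y n →ₗ[A] Z n)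
    (hcomm : ∀ n y, tZ n (g (n + 1) y) = g n (tY n y))
    (hker : ∀ n y, g n y = 0 → ∃ y', g (n + 1) y' = 0 ∧ tY n y' = y)
    {z : ∀ n, Z n} (hz : z ∈ invLim A Z tZ) (hrange : ∀ n, z n ∈ LinearMap.range (g n)) :
    ∃ y ∈ invLim A Y tY, ∀ n, g n (y n) = z n := by
  have step : ∀ n (p : {y // g n y = z n}), ∃ q : {y // g (n + 1) y = z (n + 1)}, tY n q = p := by
    rintro n ⟨p, hp⟩
    -- correct an arbitrary preimage of `z (n + 1)` by an element of the kernel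
    obtain ⟨y, hy⟩ := hrange (n + 1)
    obtain ⟨k, hk, hkt⟩ := hker n (tY n y - p) (by rw [map_sub, ← hcomm, hy, hz n, hp, sub_self])
    exact ⟨⟨y - k, by rw [map_sub, hy, hk, sub_zero]⟩, by rw [map_sub, hkt, sub_sub_cancel]⟩
  choose next hnext using step
  obtain ⟨y₀, hy₀⟩ := hrange 0
  let y : ∀ n, {y // g n y = z n} := fun n => Nat.rec ⟨y₀, hy₀⟩ next n
  exact ⟨fun n => (y n).1, fun n => hnext n (y n), fun n => (y n).2⟩

variable {N : ℕ → Type*} [∀ n, AddCommGroup (N n)] [∀ n, Module A (N n)]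
  {t : ∀ n, N (n + 1) →ₗ[A] N n}

theorem exists_rTensor_eq_zero_lTensor_eq {P Q R : Type*} [AddCommGroup P] [Module A P]
    [AddCommGroup Q] [Module A Q] [AddCommGroup R] [Module A R] {f : P →ₗ[A] Q} {g : Q →ₗ[A] R}
    (hfg : ∀ n, Function.Exact (f.rTensor (N n)) (g.rTensor (N n)))
    (hsurj : ∀ n, Function.Surjective (t n)) (n : ℕ) (y : Q ⊗[A] N n)
    (hy : g.rTensor (N n) y = 0) :
    ∃ y', g.rTensor (N (n + 1)) y' = 0 ∧ (t n).lTensor Q y' = y := by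
  obtain ⟨u, rfl⟩ := (hfg n y).mp hy
  obtain ⟨u', rfl⟩ := LinearMap.lTensor_surjective P (hsurj n) u
  exact ⟨f.rTensor _ u', (hfg (n + 1) _).mpr ⟨u', rfl⟩, LinearMap.lTensor_rTensor_comm_apply ..⟩

variable {L : Type*} [AddCommGroup L] [Module A L] {π : ∀ n, L →ₗ[A] N n}
  {hπ : ∀ n (l : L), t n (π (n + 1) l) = π n l}

variable (t π hπ) in
def invLimLift : L →ₗ[A] invLim A N t where
  toFun l := ⟨fun n => π n l, fun n => hπ n l⟩
  map_add' _ _ := Subtype.ext (funext fun n => map_add (π n) _ _)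
  map_smul' _ _ := Subtype.ext (funext fun n => map_smul (π n) _ _)

theorem kernelCompareMap_apply {M : Type*} [AddCommGroup M] [Module A M] (w : M ⊗[A] L)
    (n : ℕ) : (kernelCompareMap A M N t L π hπ w : ∀ n, M ⊗[A] N n) n = (π n).lTensor M w := by
  induction w using TensorProduct.induction_on with
  | zero => simp
  | tmul m l => rfl
  | add x y hx hy => simp only [map_add, Submodule.coe_add, Pi.add_apply, hx, hy]

theorem kernelCompareMap_rTensor_apply {M M' : Type*} [AddCommGroup M] [Module A M]
    [AddCommGroup M'] [Module A M'] (f : M →ₗ[A] M') (w : M ⊗[A] L) (n : ℕ) :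
    (kernelCompareMap A M' N t L π hπ (f.rTensor L w) : ∀ n, M' ⊗[A] N n) n
      = f.rTensor (N n) ((kernelCompareMap A M N t L π hπ w : ∀ n, M ⊗[A] N n) n) := by
  rw [kernelCompareMap_apply, kernelCompareMap_apply, LinearMap.lTensor_rTensor_comm_apply]

theorem kernelCompareMap_pi_bijective (ι : Type*) [Fintype ι] [DecidableEq ι]
    (hL : Function.Bijective (invLimLift t π hπ)) :
    Function.Bijective (kernelCompareMap A (ι → A) N t L π hπ) := by
  refine ⟨(injective_iff_map_eq_zero _).mpr fun w hw => ?_, fun x => ?_⟩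
  · refine (piScalarLeft A ι L).injective
      (funext fun i => (injective_iff_map_eq_zero _).mp hL.1 _ (Subtype.ext (funext fun n => ?_)))
    have hwn := congrArg (fun x => piScalarLeft A ι (N n) (x.1 n) i) hw
    simp only [kernelCompareMap_apply, piScalarLeft_lTensor] at hwn
    simpa [invLimLift] using hwn
  · have hcompat (i : ι) : (fun n => piScalarLeft A ι (N n) (x.1 n) i) ∈ invLim A N t :=
      fun n => by rw [← piScalarLeft_lTensor, x.2 n]
    choose l hl using fun i => hL.2 ⟨_, hcompat i⟩
    refine ⟨(piScalarLeft A ι L).symm l,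
      Subtype.ext (funext fun n => (piScalarLeft A ι (N n)).injective (funext fun i => ?_))⟩
    rw [kernelCompareMap_apply, piScalarLeft_lTensor, LinearEquiv.apply_symm_apply]
    exact congrFun (congrArg Subtype.val (hl i)) n

variable {M F₀ F₁ : Type*} [AddCommGroup M] [Module A M] [AddCommGroup F₀] [Module A F₀]
  [AddCommGroup F₁] [Module A F₁] {f : F₁ →ₗ[A] F₀} {g : F₀ →ₗ[A] M}

theorem kernelCompareMap_surjective_of_exact (hg : Function.Surjective g)
    (hfg : Function.Exact f g) (hsurj : ∀ n, Function.Surjective (t n))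
    (h₀ : Function.Surjective (kernelCompareMap A F₀ N t L π hπ)) :
    Function.Surjective (kernelCompareMap A M N t L π hπ) := by
  rintro ⟨x, hx⟩
  obtain ⟨y, hy, hyx⟩ := exists_mem_invLim_map_eq (fun n => g.rTensor (N n))
    (fun n => LinearMap.lTensor_rTensor_comm_apply g (t n))
    (exists_rTensor_eq_zero_lTensor_eq (fun n => rTensor_exact (N n) hfg hg) hsurj) hx
    (fun n => LinearMap.rTensor_surjective (N n) hg (x n))
  obtain ⟨w, hw⟩ := h₀ ⟨y, hy⟩
  refine ⟨g.rTensor L w, Subtype.ext (funext fun n => ?_)⟩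
  rw [kernelCompareMap_rTensor_apply, hw]
  exact hyx n

theorem kernelCompareMap_injective_of_exact (hg : Function.Surjective g)
    (hfg : Function.Exact f g) (hflat : ∀ n, Module.Flat A (N n))
    (hsurj : ∀ n, Function.Surjective (t n))
    (h₁ : Function.Surjective (kernelCompareMap A F₁ N t L π hπ))
    (h₀ : Function.Injective (kernelCompareMap A F₀ N t L π hπ)) :
    Function.Injective (kernelCompareMap A M N t L π hπ) := by
  refine (injective_iff_map_eq_zero _).mpr fun w hw => ?_
  obtain ⟨v, rfl⟩ := LinearMap.rTensor_surjective L hg w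
  set x := kernelCompareMap A F₀ N t L π hπ v
  have hker (n : ℕ) : x.1 n ∈ LinearMap.range (f.rTensor (N n)) :=
    (rTensor_exact (N n) hfg hg _).mp <| by
      rw [← kernelCompareMap_rTensor_apply, hw, Submodule.coe_zero, Pi.zero_apply]
  have hexact (n : ℕ) :
      Function.Exact ((LinearMap.ker f).subtype.rTensor (N n)) (f.rTensor (N n)) :=
    have := hflat n
    Module.Flat.rTensor_exact (N n) (LinearMap.exact_iff.mpr (Submodule.range_subtype _).symm)
  obtain ⟨u, hu, hux⟩ := exists_mem_invLim_map_eq (fun n => f.rTensor (N n))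
    (fun n => LinearMap.lTensor_rTensor_comm_apply f (t n))
    (exists_rTensor_eq_zero_lTensor_eq hexact hsurj) x.2 hker
  obtain ⟨w₁, hw₁⟩ := h₁ ⟨u, hu⟩
  have hv : f.rTensor L w₁ = v := h₀ <| Subtype.ext <| funext fun n => by
    rw [kernelCompareMap_rTensor_apply, hw₁, hux n]
  rw [← hv]
  exact (rTensor_exact L hfg hg).apply_apply_eq_zero w₁

end InverseLimit

theorem kernel_psi_sub_one_eq_tensor_with_lim_general (A : Type*) [CommRing A]
    (M₀ : Type*) [AddCommGroup M₀] [Module A M₀] (hfp : Module.FinitePresentation A M₀)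
    (N : ℕ → Type*) [∀ n, AddCommGroup (N n)] [∀ n, Module A (N n)]
    (t : ∀ n, N (n + 1) →ₗ[A] N n)
    (hflat : ∀ n, Module.Flat A (N n))
    (hsurj : ∀ n, Function.Surjective (t n))
    (L : Type*) [AddCommGroup L] [Module A L] (π : ∀ n, L →ₗ[A] N n)
    (hπ : ∀ n (l : L), t n (π (n + 1) l) = π n l)
    (hL : Function.Bijective
      (fun l : L => (⟨fun n => π n l, fun n => hπ n l⟩ : invLim A N t))) :
    {x : ∀ n, M₀ ⊗[A] N n |
        (fun n => LinearMap.lTensor M₀ (t n) (x (n + 1))) - x = 0} =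
      (invLim A (fun n => M₀ ⊗[A] N n) (fun n => LinearMap.lTensor M₀ (t n)) : Set (∀ n, M₀ ⊗[A] N n)) ∧
    Function.Bijective (kernelCompareMap A M₀ N t L π hπ) := by
  refine ⟨setOf_shift_sub_eq_zero_eq_invLim _, ?_⟩
  obtain ⟨k, m, g, f, hg, hfg⟩ := Module.FinitePresentation.exists_fin' A M₀
  have hfree (ι : Type) [Fintype ι] [DecidableEq ι] :=
    kernelCompareMap_pi_bijective (t := t) (π := π) (hπ := hπ) ι hL
  exact ⟨kernelCompareMap_injective_of_exact hg hfg hflat hsurj (hfree (Fin m)).2 (hfree (Fin k)).1,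
    kernelCompareMap_surjective_of_exact hg hfg hsurj (hfree (Fin k)).2⟩

/-- Kernel of `ψ - 1` on `∏ₙ (M₀ ⊗ Nₙ)`, where `ψ (xₙ)ₙ = (τₙ (x_{n+1}))ₙ` is induced by the
normalized traces: it equals the inverse limit `lim (M₀ ⊗ Nₙ)` along the normalized trace
maps, and when `M₀` is finitely presented over the Noetherian base `A`, the system `(Nₙ)` is
Mittag-Leffler (surjective transitions) and flat, and `L ≅ lim Nₙ` (e.g.
`L = D(Γ,A)/(𝔏)`, the quotient of the distribution algebra by the logarithm), then the kernel
is isomorphic to `M₀ ⊗ L`. -/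
theorem kernel_psi_sub_one_eq_tensor_with_lim (A : Type*) [CommRing A] [IsNoetherianRing A]
    (M₀ : Type*) [AddCommGroup M₀] [Module A M₀] (hfp : Module.FinitePresentation A M₀)
    (N : ℕ → Type*) [∀ n, AddCommGroup (N n)] [∀ n, Module A (N n)]
    (t : ∀ n, N (n + 1) →ₗ[A] N n)
    (hflat : ∀ n, Module.Flat A (N n))
    (hsurj : ∀ n, Function.Surjective (t n))
    (L : Type*) [AddCommGroup L] [Module A L] (π : ∀ n, L →ₗ[A] N n)
    (hπ : ∀ n (l : L), t n (π (n + 1) l) = π n l)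
    (hL : Function.Bijective
      (fun l : L => (⟨fun n => π n l, fun n => hπ n l⟩ : invLim A N t))) :
    {x : ∀ n, M₀ ⊗[A] N n |
        (fun n => LinearMap.lTensor M₀ (t n) (x (n + 1))) - x = 0} =
      (invLim A (fun n => M₀ ⊗[A] N n) (fun n => LinearMap.lTensor M₀ (t n)) : Set (∀ n, M₀ ⊗[A] N n)) ∧
    Function.Bijective (kernelCompareMap A M₀ N t L π hπ) :=
  kernel_psi_sub_one_eq_tensor_with_lim_general A M₀ hfp N t hflat hsurj L π hπ hL
end
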